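/- Let ξ be δ-badly approximable with 0 < δ < 1/2, β ∈ [0,1], α = 1 − β, and p a positive integer. Then for every integer ν ≥ 0, the number of integers x with 2^ν·p < x ≤ 2^{ν+1}·p and ‖xξ‖ ≤ δ/(2^ν p · log(2^ν p + 1))^β is at most (24δ + 2)·(2^ν p)^α / (log(2^ν p + 1))^β. -/

import Mathlib

/-!
With `q = 2^ν p` and `ε = δ / (q log (q + 1))^β` the bound reads `(24δ + 2) qε/δ`, so it suffices
to count the `x ∈ (q, 2q]` with `‖xξ‖ ≤ ε`. Two such points `x < y` have `‖(y - x)ξ‖ ≤ 2ε`, so bad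
approximability keeps them `δ/(2ε)` apart, which settles the case `4qε ≥ 1`. If `4qε < 1`, the
integer `x·round(yξ) - y·round(xξ)` has absolute value below `1` and vanishes, so every error
`yξ - round(yξ)` equals `y·c` for one real `c` with `q|c| ≤ ε`. Then `δ ≤ (y - x)²|c|` keeps the
points `√(qδ/ε)` apart, and at most `1 + √(qε/δ)` of them fit into `(q, 2q]`.
-/

open Real

/-- Distance from a real number to the nearest integer. -/
noncomputable def nint (t : ℝ) : ℝ := |t - round t|

theorem card_sub_one_mul_le_of_le_sub {K : Type*} [CommRing K] [LinearOrder K]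
    [IsStrictOrderedRing K] {s : Finset K} {a b d : K} (hs : s.Nonempty)
    (hmem : ∀ x ∈ s, a ≤ x ∧ x ≤ b)
    (hsep : ∀ x ∈ s, ∀ y ∈ s, x < y → d ≤ y - x) : ((s.card : K) - 1) * d ≤ b - a := by
  classical
  induction s using Finset.induction_on_max generalizing b with
  | empty => simp at hs
  | insert x s hlt ih =>
    have hxb := (hmem x (Finset.mem_insert_self x s)).2
    rcases s.eq_empty_or_nonempty with rfl | hne
    · simpa using (hmem x (Finset.mem_insert_self x ∅)).1.trans hxb
    have hm := s.max'_mem hne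
    have hgap := hsep _ (Finset.mem_insert_of_mem hm) x (Finset.mem_insert_self x s) (hlt _ hm)
    have hle := ih (b := s.max' hne) hne
      (fun y hy => ⟨(hmem y (Finset.mem_insert_of_mem hy)).1, s.le_max' y hy⟩)
      (fun y hy z hz => hsep y (Finset.mem_insert_of_mem hy) z (Finset.mem_insert_of_mem hz))
    rw [Finset.card_insert_of_notMem fun h => (hlt x h).false]
    push_cast
    linarith

def BadlyApproximable (δ ξ : ℝ) : Prop :=
  ∀ p : ℕ, 0 < p → δ ≤ (p : ℝ) * nint ((p : ℝ) * ξ)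

theorem BadlyApproximable.le_mul_abs_sub {δ ξ : ℝ} (h : BadlyApproximable δ ξ) {x : ℕ}
    (hx : 0 < x) (z : ℤ) : δ ≤ x * |x * ξ - z| :=
  (h x hx).trans (mul_le_mul_of_nonneg_left (round_le _ z) x.cast_nonneg)

noncomputable def closeMultiples (ξ ε : ℝ) (q : ℕ) : Finset ℕ :=
  (Finset.Ioc q (2 * q)).filter fun x => nint (x * ξ) ≤ ε

section closeMultiples

variable {ξ δ ε : ℝ} {q : ℕ}

theorem mem_closeMultiples {x : ℕ} :
    x ∈ closeMultiples ξ ε q ↔ q < x ∧ x ≤ 2 * q ∧ nint (x * ξ) ≤ ε := by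
  simp [closeMultiples, and_assoc]

theorem pos_of_mem_closeMultiples {x : ℕ} (hx : x ∈ closeMultiples ξ ε q) : 0 < x :=
  (Nat.zero_le q).trans_lt (mem_closeMultiples.1 hx).1

theorem card_closeMultiples_sub_one_mul_le {d : ℝ} (hne : (closeMultiples ξ ε q).Nonempty)
    (hsep : ∀ x ∈ closeMultiples ξ ε q, ∀ y ∈ closeMultiples ξ ε q, x < y → d ≤ (y : ℝ) - x) :
    ((closeMultiples ξ ε q).card - 1 : ℝ) * d ≤ q := by
  have h := card_sub_one_mul_le_of_le_sub (hne.image Nat.cast) (a := (q : ℝ)) (b := 2 * q)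
    (Finset.forall_mem_image.2 fun x hx => by
      obtain ⟨hqx, hx2q, -⟩ := mem_closeMultiples.1 hx
      exact ⟨by exact_mod_cast hqx.le, by exact_mod_cast hx2q⟩)
    (Finset.forall_mem_image.2 fun x hx => Finset.forall_mem_image.2 fun y hy hxy =>
      hsep x hx y hy (by exact_mod_cast hxy))
  rw [Finset.card_image_of_injective _ Nat.cast_injective] at h
  linarith

theorem BadlyApproximable.le_two_mul_mul_of_mem (hbad : BadlyApproximable δ ξ) {x : ℕ}
    (hx : x ∈ closeMultiples ξ ε q) : δ ≤ 2 * q * ε := by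
  obtain ⟨-, hx2q, hxε⟩ := mem_closeMultiples.1 hx
  calc δ ≤ x * nint (x * ξ) := hbad x (pos_of_mem_closeMultiples hx)
    _ ≤ 2 * q * ε := mul_le_mul (by exact_mod_cast hx2q) hxε (abs_nonneg _) (by positivity)

theorem BadlyApproximable.div_le_sub_of_mem (hbad : BadlyApproximable δ ξ) (hε : 0 < ε)
    {x y : ℕ} (hx : x ∈ closeMultiples ξ ε q) (hy : y ∈ closeMultiples ξ ε q) (hxy : x < y) :
    δ / (2 * ε) ≤ (y : ℝ) - x := by
  have hxε := (mem_closeMultiples.1 hx).2.2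
  have hyε := (mem_closeMultiples.1 hy).2.2
  have hgap : |((y - x : ℕ) : ℝ) * ξ - ((round (y * ξ) - round (x * ξ) : ℤ) : ℝ)| ≤ 2 * ε := by
    rw [Nat.cast_sub hxy.le, Int.cast_sub]
    calc _ = |(y * ξ - round (y * ξ)) - (x * ξ - round (x * ξ))| := by ring_nf
      _ ≤ nint (y * ξ) + nint (x * ξ) := abs_sub _ _
      _ ≤ 2 * ε := by linarith
  have h := hbad.le_mul_abs_sub (Nat.sub_pos_of_lt hxy) (round (y * ξ) - round (x * ξ))
  rw [Nat.cast_sub hxy.le] at h hgap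
  rw [div_le_iff₀ (by positivity)]
  have hxy' : (0 : ℝ) ≤ y - x := by rw [sub_nonneg]; exact_mod_cast hxy.le
  nlinarith

theorem round_mul_eq_of_mem (hB : 4 * q * ε < 1) {x y : ℕ} (hx : x ∈ closeMultiples ξ ε q)
    (hy : y ∈ closeMultiples ξ ε q) : (x : ℤ) * round (y * ξ) = y * round (x * ξ) := by
  obtain ⟨-, hx2q, hxε⟩ := mem_closeMultiples.1 hx
  obtain ⟨-, hy2q, hyε⟩ := mem_closeMultiples.1 hy
  have hx2q' : (x : ℝ) ≤ 2 * q := by exact_mod_cast hx2q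
  have hy2q' : (y : ℝ) ≤ 2 * q := by exact_mod_cast hy2q
  have key : ((x * round (y * ξ) - y * round (x * ξ) : ℤ) : ℝ)
      = y * (x * ξ - round (x * ξ)) - x * (y * ξ - round (y * ξ)) := by
    push_cast; ring
  have hlt : |((x * round (y * ξ) - y * round (x * ξ) : ℤ) : ℝ)| < 1 := by
    rw [key]
    calc _ ≤ |y * (x * ξ - round (x * ξ))| + |x * (y * ξ - round (y * ξ))| := abs_sub _ _
      _ = y * nint (x * ξ) + x * nint (y * ξ) := by
        rw [abs_mul, abs_mul, Nat.abs_cast, Nat.abs_cast]; rfl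
      _ ≤ 2 * q * ε + 2 * q * ε :=
        add_le_add (mul_le_mul hy2q' hxε (abs_nonneg _) (by positivity))
          (mul_le_mul hx2q' hyε (abs_nonneg _) (by positivity))
      _ < 1 := by linarith
  exact sub_eq_zero.1 (Int.abs_lt_one_iff.1 (by exact_mod_cast hlt))

theorem sub_round_eq_mul_of_mem (hB : 4 * q * ε < 1) {x₀ y : ℕ}
    (hx₀ : x₀ ∈ closeMultiples ξ ε q) (hy : y ∈ closeMultiples ξ ε q) :
    y * ξ - round (y * ξ) = y * ((x₀ * ξ - round (x₀ * ξ)) / x₀) := by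
  have hx₀pos : (0 : ℝ) < x₀ := by exact_mod_cast pos_of_mem_closeMultiples hx₀
  have h : (x₀ : ℝ) * round (y * ξ) = y * round (x₀ * ξ) := by
    exact_mod_cast round_mul_eq_of_mem hB hx₀ hy
  rw [mul_div_assoc', eq_div_iff hx₀pos.ne']
  linear_combination -h

theorem BadlyApproximable.mul_le_sq_sub_mul_of_mem (hbad : BadlyApproximable δ ξ)
    (hB : 4 * q * ε < 1) {x₀ x y : ℕ} (hx₀ : x₀ ∈ closeMultiples ξ ε q)
    (hx : x ∈ closeMultiples ξ ε q) (hy : y ∈ closeMultiples ξ ε q) (hxy : x < y) :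
    q * δ ≤ ((y : ℝ) - x) ^ 2 * ε := by
  set c := (x₀ * ξ - round (x₀ * ξ)) / x₀
  obtain ⟨hqx₀, -, hx₀ε⟩ := mem_closeMultiples.1 hx₀
  have hqc : q * |c| ≤ ε := by
    have hx₀c : x₀ * c = x₀ * ξ - round (x₀ * ξ) := by
      rw [mul_div_cancel₀]; exact_mod_cast (pos_of_mem_closeMultiples hx₀).ne'
    calc q * |c| ≤ x₀ * |c| := by gcongr
      _ = nint (x₀ * ξ) := by rw [nint, ← hx₀c, abs_mul, Nat.abs_cast]
      _ ≤ ε := hx₀ε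
  have h := hbad.le_mul_abs_sub (Nat.sub_pos_of_lt hxy) (round (y * ξ) - round (x * ξ))
  have hdiff : ((y - x : ℕ) : ℝ) * ξ - ((round (y * ξ) - round (x * ξ) : ℤ) : ℝ)
      = (y - x : ℝ) * c := by
    rw [Nat.cast_sub hxy.le, Int.cast_sub]
    linear_combination sub_round_eq_mul_of_mem hB hx₀ hy - sub_round_eq_mul_of_mem hB hx₀ hx
  rw [hdiff, Nat.cast_sub hxy.le, abs_mul, abs_of_pos (sub_pos.2 (by exact_mod_cast hxy))] at h
  calc q * δ ≤ q * ((y - x) * ((y - x) * |c|)) := by gcongr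
    _ = ((y : ℝ) - x) ^ 2 * (q * |c|) := by ring
    _ ≤ ((y : ℝ) - x) ^ 2 * ε := by gcongr

theorem BadlyApproximable.sq_card_closeMultiples_sub_one_mul_le (hbad : BadlyApproximable δ ξ)
    (hδ : 0 ≤ δ) (hε : 0 < ε) (hB : 4 * q * ε < 1) (hne : (closeMultiples ξ ε q).Nonempty) :
    ((closeMultiples ξ ε q).card - 1 : ℝ) ^ 2 * δ ≤ q * ε := by
  obtain ⟨x₀, hx₀⟩ := hne
  have hq : (0 : ℝ) < q := by
    obtain ⟨hqx₀, hx₀2q, -⟩ := mem_closeMultiples.1 hx₀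
    exact_mod_cast (show 0 < q by omega)
  have hk : (0 : ℝ) ≤ (closeMultiples ξ ε q).card - 1 := by
    rw [sub_nonneg]; exact_mod_cast Finset.card_pos.2 ⟨x₀, hx₀⟩
  have h := card_closeMultiples_sub_one_mul_le ⟨x₀, hx₀⟩ (d := √(q * δ / ε))
    fun x hx y hy hxy => Real.sqrt_le_iff.2
      ⟨sub_nonneg.2 (by exact_mod_cast hxy.le),
        (div_le_iff₀ hε).2 (hbad.mul_le_sq_sub_mul_of_mem hB hx₀ hx hy hxy)⟩
  have h2 := pow_le_pow_left₀ (mul_nonneg hk (sqrt_nonneg _)) h 2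
  rw [mul_pow, sq_sqrt (by positivity), mul_div_assoc', div_le_iff₀ hε] at h2
  exact le_of_mul_le_mul_left (by linarith) hq

theorem BadlyApproximable.card_closeMultiples_le (hbad : BadlyApproximable δ ξ) (hδ : 0 < δ)
    (hε : 0 < ε) : ((closeMultiples ξ ε q).card : ℝ) ≤ (4 * δ + 2) * (q * ε / δ) := by
  rw [← mul_div_assoc, le_div_iff₀ hδ]
  rcases (closeMultiples ξ ε q).eq_empty_or_nonempty with hS | ⟨x, hx⟩
  · rw [hS, Finset.card_empty, Nat.cast_zero, zero_mul]; positivity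
  have hδq := hbad.le_two_mul_mul_of_mem hx
  rcases le_or_gt 1 (4 * q * ε) with hA | hB
  · have h := card_closeMultiples_sub_one_mul_le ⟨x, hx⟩ fun x hx y hy hxy =>
      hbad.div_le_sub_of_mem hε hx hy hxy
    rw [← mul_div_assoc, div_le_iff₀ (by positivity)] at h
    have hδA := mul_le_mul_of_nonneg_left hA hδ.le
    linarith
  · have h := hbad.sq_card_closeMultiples_sub_one_mul_le hδ.le hε hB ⟨x, hx⟩
    have hkδ : ((closeMultiples ξ ε q).card : ℝ) * δ ≤ 2 * (q * ε) := by
      obtain hk | hk : (closeMultiples ξ ε q).card = 1 ∨ 2 ≤ (closeMultiples ξ ε q).card := by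
        have := Finset.card_pos.2 ⟨x, hx⟩; omega
      · rw [hk, Nat.cast_one]; linarith
      · have hk' : (2 : ℝ) ≤ (closeMultiples ξ ε q).card := by exact_mod_cast hk
        nlinarith
    have hqε : 0 ≤ δ * (q * ε) := by positivity
    linarith

end closeMultiples

theorem stmt5_general (ξ δ α β : ℝ) (hδ0 : 0 < δ)
    (hbad : ∀ p : ℕ, 0 < p → δ ≤ (p : ℝ) * nint ((p : ℝ) * ξ))
    (hα : α = 1 - β)
    (p : ℕ) (hp : 0 < p) (ν : ℕ) :
    (((Finset.Ioc (2 ^ ν * p) (2 ^ (ν + 1) * p)).filter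
        (fun x : ℕ => nint ((x : ℝ) * ξ)
          ≤ δ / (((2 ^ ν * p : ℕ) : ℝ) * Real.log (((2 ^ ν * p : ℕ) : ℝ) + 1)) ^ β)).card : ℝ)
      ≤ (24 * δ + 2) * (((2 ^ ν * p : ℕ) : ℝ)) ^ α
          / (Real.log (((2 ^ ν * p : ℕ) : ℝ) + 1)) ^ β := by
  rw [show 2 ^ (ν + 1) * p = 2 * (2 ^ ν * p) by ring]
  set q := 2 ^ ν * p
  have hq : (0 : ℝ) < q := by positivity
  have hlog : 0 < log (q + 1) := log_pos (by linarith)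
  have hrhs : (q : ℝ) ^ α / log (q + 1) ^ β = q * (δ / (q * log (q + 1)) ^ β) / δ := by
    rw [hα, rpow_sub hq, rpow_one, mul_rpow hq.le hlog.le]
    field_simp
  rw [mul_div_assoc, hrhs]
  calc _ ≤ (4 * δ + 2) * (q * (δ / (q * log (q + 1)) ^ β) / δ) :=
        BadlyApproximable.card_closeMultiples_le hbad hδ0 (by positivity)
    _ ≤ _ := by gcongr; linarith

theorem stmt5 (ξ δ α β : ℝ) (hδ0 : 0 < δ) (hδ1 : δ < 1/2)
    (hbad : ∀ p : ℕ, 0 < p → δ ≤ (p : ℝ) * nint ((p : ℝ) * ξ))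
    (hβ0 : 0 ≤ β) (hβ1 : β ≤ 1) (hα : α = 1 - β)
    (p : ℕ) (hp : 0 < p) (ν : ℕ) :
    (((Finset.Ioc (2 ^ ν * p) (2 ^ (ν + 1) * p)).filter
        (fun x : ℕ => nint ((x : ℝ) * ξ)
          ≤ δ / (((2 ^ ν * p : ℕ) : ℝ) * Real.log (((2 ^ ν * p : ℕ) : ℝ) + 1)) ^ β)).card : ℝ)
      ≤ (24 * δ + 2) * (((2 ^ ν * p : ℕ) : ℝ)) ^ α
          / (Real.log (((2 ^ ν * p : ℕ) : ℝ) + 1)) ^ β :=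
  stmt5_general ξ δ α β hδ0 hbad hα p hp ν
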